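/- Let p be an odd prime and define θ_p : ℤ³ → ℤ by θ_p(x1,x2,x3) = (x1−x2)·(((2x3−x2)^p + x2^p − 2x3^p)/p), where the division by p is exact. Then θ_p is a quandle 3-cocycle of the dihedral quandle modulo p: (i) θ_p(x1,x2,x3) ≡ 0 (mod p) whenever x1 = x2 or x2 = x3; and (ii) for all integers x1,x2,x3,x4, θ_p(x1,x3,x4) − θ_p(x1,x2,x4) + θ_p(x1,x2,x3) ≡ θ_p(2x2−x1, x3, x4) − θ_p(2x3−x1, 2x3−x2, x4) + θ_p(2x4−x1, 2x4−x2, 2x4−x3) (mod p). -/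

import Mathlib

/-- Mochizuki's 3-cocycle on the integers: 
`θ_p(x1,x2,x3) = (x1 - x2) * (((2x3 - x2)^p + x2^p - 2x3^p) / p)`,
where the division by `p` is exact. -/
def mochizukiTheta (p : ℕ) (x1 x2 x3 : ℤ) : ℤ :=
  (x1 - x2) * (((2 * x3 - x2) ^ p + x2 ^ p - 2 * x3 ^ p) / (p : ℤ))

/-
The numerator `N(a, b) = (2b - a)^p + a^p - 2b^p` of `θ_p` is divisible by `p` by Fermat's little
theorem, so division by `p` is additive on these numerators. The cocycle identity then holds
exactly over `ℤ`: after cancelling the common factor `x1 - x2`, it reduces to the polynomial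
identity `N(x2, x4) + N(2x3 - x2, x4) = 2 N(x3, x4) + N(x2, x3) + N(2x4 - x2, 2x4 - x3)`,
valid for every exponent. Condition (i) holds since `θ_p` vanishes identically there.
-/

def thetaNumerator {R : Type*} [CommRing R] (n : ℕ) (a b : R) : R :=
  (2 * b - a) ^ n + a ^ n - 2 * b ^ n

lemma mochizukiTheta_eq (p : ℕ) (x1 x2 x3 : ℤ) :
    mochizukiTheta p x1 x2 x3 = (x1 - x2) * (thetaNumerator p x2 x3 / p) :=
  rfl

lemma thetaNumerator_self {R : Type*} [CommRing R] (n : ℕ) (a : R) : thetaNumerator n a a = 0 := by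
  rw [thetaNumerator]
  ring

lemma thetaNumerator_cocycle {R : Type*} [CommRing R] (n : ℕ) (x2 x3 x4 : R) :
    thetaNumerator n x2 x4 + thetaNumerator n (2 * x3 - x2) x4 =
      2 * thetaNumerator n x3 x4 + thetaNumerator n x2 x3
        + thetaNumerator n (2 * x4 - x2) (2 * x4 - x3) := by
  simp only [thetaNumerator]
  ring

lemma prime_dvd_thetaNumerator {p : ℕ} (hp : p.Prime) (a b : ℤ) :
    (p : ℤ) ∣ thetaNumerator p a b := by
  have : Fact p.Prime := ⟨hp⟩
  rw [← ZMod.intCast_zmod_eq_zero_iff_dvd, thetaNumerator]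
  push_cast
  rw [ZMod.pow_card, ZMod.pow_card, ZMod.pow_card]
  ring

lemma mochizukiTheta_self_left (p : ℕ) (x y : ℤ) : mochizukiTheta p x x y = 0 := by
  rw [mochizukiTheta_eq, sub_self, zero_mul]

lemma mochizukiTheta_self_right (p : ℕ) (x y : ℤ) : mochizukiTheta p x y y = 0 := by
  rw [mochizukiTheta_eq, thetaNumerator_self, Int.zero_ediv, mul_zero]

lemma thetaNumerator_div_cocycle {p : ℕ} (hp : p.Prime) (x2 x3 x4 : ℤ) :
    thetaNumerator p x2 x4 / p + thetaNumerator p (2 * x3 - x2) x4 / p =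
      2 * (thetaNumerator p x3 x4 / p) + thetaNumerator p x2 x3 / p
        + thetaNumerator p (2 * x4 - x2) (2 * x4 - x3) / p := by
  have hp0 : (p : ℤ) ≠ 0 := Int.natCast_ne_zero.mpr hp.ne_zero
  have hdiv (a b : ℤ) : (p : ℤ) * (thetaNumerator p a b / p) = thetaNumerator p a b :=
    Int.mul_ediv_cancel' (prime_dvd_thetaNumerator hp a b)
  apply mul_left_cancel₀ hp0
  linear_combination thetaNumerator_cocycle p x2 x3 x4 + hdiv x2 x4 + hdiv (2 * x3 - x2) x4
    - 2 * hdiv x3 x4 - hdiv x2 x3 - hdiv (2 * x4 - x2) (2 * x4 - x3)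

lemma mochizukiTheta_cocycle {p : ℕ} (hp : p.Prime) (x1 x2 x3 x4 : ℤ) :
    mochizukiTheta p x1 x3 x4 - mochizukiTheta p x1 x2 x4 + mochizukiTheta p x1 x2 x3 =
      mochizukiTheta p (2 * x2 - x1) x3 x4
        - mochizukiTheta p (2 * x3 - x1) (2 * x3 - x2) x4
        + mochizukiTheta p (2 * x4 - x1) (2 * x4 - x2) (2 * x4 - x3) := by
  simp only [mochizukiTheta_eq]
  linear_combination (x2 - x1) * thetaNumerator_div_cocycle hp x2 x3 x4

theorem stmt_2_general (p : ℕ) (hp : p.Prime) :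
    (∀ x1 x2 x3 : ℤ, (x1 = x2 ∨ x2 = x3) → mochizukiTheta p x1 x2 x3 ≡ 0 [ZMOD (p : ℤ)]) ∧
    (∀ x1 x2 x3 x4 : ℤ,
      mochizukiTheta p x1 x3 x4 - mochizukiTheta p x1 x2 x4 + mochizukiTheta p x1 x2 x3 ≡
        mochizukiTheta p (2 * x2 - x1) x3 x4
          - mochizukiTheta p (2 * x3 - x1) (2 * x3 - x2) x4
          + mochizukiTheta p (2 * x4 - x1) (2 * x4 - x2) (2 * x4 - x3) [ZMOD (p : ℤ)]) := by
  constructor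
  · rintro x1 x2 x3 (rfl | rfl)
    · rw [mochizukiTheta_self_left]
    · rw [mochizukiTheta_self_right]
  · intro x1 x2 x3 x4
    rw [mochizukiTheta_cocycle hp]

/-- `θ_p` is a quandle 3-cocycle of the dihedral quandle `R_p` (with operation
`x * y = 2y - x`) with coefficients in `ℤ/pℤ`:
(i) `θ_p(x1,x2,x3) ≡ 0 (mod p)` whenever `x1 = x2` or `x2 = x3`, and
(ii) the 3-cocycle identity holds modulo `p`. -/
theorem stmt_2 (p : ℕ) (hp : p.Prime) (hodd : Odd p) :
    (∀ x1 x2 x3 : ℤ, (x1 = x2 ∨ x2 = x3) → mochizukiTheta p x1 x2 x3 ≡ 0 [ZMOD (p : ℤ)]) ∧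
    (∀ x1 x2 x3 x4 : ℤ,
      mochizukiTheta p x1 x3 x4 - mochizukiTheta p x1 x2 x4 + mochizukiTheta p x1 x2 x3 ≡
        mochizukiTheta p (2 * x2 - x1) x3 x4
          - mochizukiTheta p (2 * x3 - x1) (2 * x3 - x2) x4
          + mochizukiTheta p (2 * x4 - x1) (2 * x4 - x2) (2 * x4 - x3) [ZMOD (p : ℤ)]) :=
  stmt_2_general p hp
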